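/- arXiv:2604.22991 — 7 statements merged into one kernel-verified Lean document; each statement's English description precedes it below -/
import Mathlib

section
/- For every n ≥ 1, w_{n,1/2} = 1/2. -/
noncomputable def w (p : ℝ) : ℕ → ℝ
  | 0 => 1
  | n + 1 =>
    p ^ (n + 1) +
      ∑ j ∈ (Finset.Icc 1 n).attach,
        ((n + 1).choose j.1 : ℝ) * p ^ (n + 1 - j.1) * (1 - p) ^ j.1 *
          (Finset.Icc j.1 n).attach.sup'
            (Finset.attach_nonempty_iff.mpr
              (Finset.nonempty_Icc.mpr (Finset.mem_Icc.mp j.2).2))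
            (fun m => w p m.1)
  decreasing_by
    exact Nat.lt_succ_of_le (Finset.mem_Icc.mp m.2).2

theorem w_half (n : ℕ) (hn : 1 ≤ n) : w (1/2) n = 1/2 := by
  induction n using Nat.strong_induction_on with
  | _ n ih =>
  obtain ⟨m, rfl⟩ := Nat.exists_eq_succ_of_ne_zero (by omega : n ≠ 0)
  rw [w]
  have hsup : ∀ j : {x // x ∈ Finset.Icc 1 m},
      (Finset.Icc j.1 m).attach.sup'
        (Finset.attach_nonempty_iff.mpr
          (Finset.nonempty_Icc.mpr (Finset.mem_Icc.mp j.2).2))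
        (fun m' => w (1/2) m'.1) = 1/2 := by
    intro j
    have h1 := (Finset.mem_Icc.mp j.2).1
    have h2 := (Finset.mem_Icc.mp j.2).2
    apply le_antisymm
    · exact Finset.sup'_le _ _ fun b _ => le_of_eq
        (ih b.1 (Nat.lt_succ_of_le (Finset.mem_Icc.mp b.2).2)
          (le_trans h1 (Finset.mem_Icc.mp b.2).1))
    · exact Finset.le_sup'_of_le _
        (Finset.mem_attach _ ⟨j.1, Finset.mem_Icc.mpr ⟨le_refl _, h2⟩⟩)
        (le_of_eq (ih j.1 (Nat.lt_succ_of_le h2) h1).symm)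
  rw [Finset.sum_congr rfl fun j _ => by rw [hsup j]]
  have hterm : ∀ j ∈ Finset.Icc 1 m,
      ((m + 1).choose j : ℝ) * (1/2) ^ (m + 1 - j) * (1 - 1/2) ^ j * (1/2)
        = ((m + 1).choose j : ℝ) * (1/2) ^ (m + 2) := by
    intro j hj
    have hjle : j ≤ m + 1 := le_trans (Finset.mem_Icc.mp hj).2 (Nat.le_succ m)
    have : ((1:ℝ)/2) ^ (m + 1 - j) * (1/2) ^ j = (1/2) ^ (m + 1) := by
      rw [← pow_add, Nat.sub_add_cancel hjle]
    norm_num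
    calc ((m + 1).choose j : ℝ) * (1/2) ^ (m + 1 - j) * (1/2) ^ j * (1/2)
        = ((m + 1).choose j : ℝ) * ((1/2) ^ (m + 1 - j) * (1/2) ^ j) * (1/2) := by ring
      _ = ((m + 1).choose j : ℝ) * (1/2) ^ (m + 1) * (1/2) := by rw [this]
      _ = ((m + 1).choose j : ℝ) * (1/2) ^ (m + 2) := by ring
  rw [Finset.sum_attach _ (fun j => ((m + 1).choose j : ℝ) * (1/2) ^ (m + 1 - j) * (1 - 1/2) ^ j * (1/2)),
    Finset.sum_congr rfl hterm, ← Finset.sum_mul]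
  have hC : ∑ j ∈ Finset.Icc 1 m, ((m + 1).choose j : ℝ) = 2 ^ (m + 1) - 2 := by
    have h1 : ∑ i ∈ Finset.range (m + 2), ((m + 1).choose i : ℝ) = 2 ^ (m + 1) := by
      exact_mod_cast congrArg (Nat.cast : ℕ → ℝ) (Nat.sum_range_choose (m + 1))
    rw [show Finset.range (m + 2) = insert 0 (insert (m + 1) (Finset.Icc 1 m)) from by
      ext x; simp [Finset.mem_Icc]; omega] at h1
    rw [Finset.sum_insert (by simp), Finset.sum_insert (by simp)] at h1
    simp at h1
    linarith
  rw [hC]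
  have hx : (2:ℝ) ^ (m + 1) ≠ 0 := by positivity
  have h12 : ((1:ℝ)/2) ^ (m + 1) = (2 ^ (m + 1))⁻¹ := by rw [one_div, inv_pow]
  have h12' : ((1:ℝ)/2) ^ (m + 2) = (2 ^ (m + 2))⁻¹ := by rw [one_div, inv_pow]
  rw [h12, h12', pow_succ]
  field_simp
  ring
end

section
/- For 1/2 < p < 1 and all n ≥ 2: (i) w_{n,p} > w_{n-1,p}; (ii) w_{n-1,p} < p^n/(p^n + q^n) where q = 1-p; and (iii) w_{n,p} = a_{n,p}, where a_{n,p} is defined by a_{0,p} = 1 and a_{n,p} = p^n + (1 - p^n - q^n) a_{n-1,p}. -/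
noncomputable def strategyOne (p : ℝ) : ℕ → ℝ
  | 0 => 1
  | n + 1 => p ^ (n + 1) + (1 - p ^ (n + 1) - (1 - p) ^ (n + 1)) * strategyOne p n

lemma coeff_le (p : ℝ) (hp : 1/2 < p) (hp1 : p < 1) (n : ℕ) :
    p ^ (n+1) + (1-p) ^ (n+1) ≤ 1 := by
  have h1 : p ^ (n+1) ≤ p := pow_le_of_le_one (by linarith) (by linarith) (by omega)
  have h2 : (1-p) ^ (n+1) ≤ 1-p := pow_le_of_le_one (by linarith) (by linarith) (by omega)
  linarith

lemma coeff_lt (p : ℝ) (hp : 1/2 < p) (hp1 : p < 1) (n : ℕ) :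
    p ^ (n+2) + (1-p) ^ (n+2) < 1 := by
  have h1 : p ^ (n+2) ≤ p^2 := pow_le_pow_of_le_one (by linarith) (by linarith) (by omega)
  have h2 : (1-p) ^ (n+2) ≤ (1-p)^2 := pow_le_pow_of_le_one (by linarith) (by linarith) (by omega)
  nlinarith [mul_pos (show (0:ℝ) < p by linarith) (show (0:ℝ) < 1-p by linarith)]

lemma s_nonneg (p : ℝ) (hp : 1/2 < p) (hp1 : p < 1) : ∀ n, 0 ≤ strategyOne p n := by
  intro n
  induction n with
  | zero => norm_num [strategyOne]
  | succ k ih =>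
    rw [strategyOne]
    have h := coeff_le p hp hp1 k
    have hx : (0:ℝ) ≤ p ^ (k+1) := by positivity
    nlinarith

lemma key (p : ℝ) (hp : 1/2 < p) (hp1 : p < 1) :
    ∀ n, strategyOne p (n+1) * (p^(n+2) + (1-p)^(n+2)) < p^(n+2) := by
  intro n
  induction n with
  | zero =>
    have h : strategyOne p 1 = p := by rw [strategyOne, strategyOne]; ring
    rw [h]
    norm_num
    nlinarith [mul_pos (mul_pos (show (0:ℝ) < p by linarith) (show (0:ℝ) < 2*p-1 by linarith)) (show (0:ℝ) < 1-p by linarith)]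
  | succ k ih =>
    have hx : (0:ℝ) < p^(k+2) := by positivity
    have hy : (0:ℝ) < (1-p)^(k+2) := pow_pos (by linarith) _
    set x := p^(k+2) with hxdef
    set y := (1-p)^(k+2) with hydef
    have hc : x + y < 1 := coeff_lt p hp hp1 k
    have ha : 0 ≤ strategyOne p (k+1) := s_nonneg p hp hp1 (k+1)
    have hs : strategyOne p (k+2) = x + (1 - x - y) * strategyOne p (k+1) := by
      rw [strategyOne]
    -- first: a' * (x+y) < x
    have h1 : strategyOne p (k+2) * (x + y) < x := by
      rw [hs]
      nlinarith [ih]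
    have ha' : 0 ≤ strategyOne p (k+2) := s_nonneg p hp hp1 (k+2)
    have hpx : p^(k+3) = p * x := by rw [hxdef]; ring
    have hqy : (1-p)^(k+3) = (1-p) * y := by rw [hydef]; ring
    have hgoal : strategyOne p (k+2) * (p * x + (1-p) * y) < p * x := by
      nlinarith [mul_pos (show (0:ℝ) < p by linarith) (sub_pos.mpr h1),
        mul_nonneg (mul_nonneg ha' hy.le) (show (0:ℝ) ≤ p - (1-p) by linarith)]
    calc strategyOne p (k+2) * (p^(k+3) + (1-p)^(k+3))
        = strategyOne p (k+2) * (p*x + (1-p)*y) := by rw [hpx, hqy]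
      _ < p * x := hgoal
      _ = p^(k+3) := by rw [hxdef]; ring

lemma sstep (p : ℝ) (hp : 1/2 < p) (hp1 : p < 1) (n : ℕ) :
    strategyOne p (n+1) < strategyOne p (n+2) := by
  have h := key p hp hp1 n
  have hs : strategyOne p (n+2) = p^(n+2) + (1 - p^(n+2) - (1-p)^(n+2)) * strategyOne p (n+1) := by
    rw [strategyOne]
  nlinarith [h]

lemma smono (p : ℝ) (hp : 1/2 < p) (hp1 : p < 1) :
    ∀ m n, 1 ≤ m → m ≤ n → strategyOne p m ≤ strategyOne p n := by
  intro m n hm hmn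
  induction n with
  | zero => omega
  | succ k ih =>
    rcases Nat.lt_or_ge m (k+1) with h | h
    · have hk : 1 ≤ k := by omega
      obtain ⟨k', rfl⟩ : ∃ k', k = k' + 1 := ⟨k-1, by omega⟩
      exact le_trans (ih (by omega)) (sstep p hp hp1 k').le
    · have : m = k+1 := by omega
      subst this; rfl

lemma bsum (p : ℝ) (N : ℕ) :
    ∑ j ∈ Finset.Icc 1 N, (((N+1).choose j : ℝ) * p^(N+1-j) * (1-p)^j)
      = 1 - p^(N+1) - (1-p)^(N+1) := by
  have h := add_pow (1-p) p (N+1)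
  rw [show (1-p) + p = 1 by ring, one_pow] at h
  have h2 : ∑ k ∈ Finset.range (N+2), (1-p)^k * p^(N+1-k) * ((N+1).choose k : ℝ)
      = (∑ k ∈ Finset.range (N+1), (1-p)^k * p^(N+1-k) * ((N+1).choose k : ℝ))
        + (1-p)^(N+1) := by
    rw [Finset.sum_range_succ]
    simp
  have h3 : ∑ k ∈ Finset.range (N+1), (1-p)^k * p^(N+1-k) * ((N+1).choose k : ℝ)
      = (∑ k ∈ Finset.range N, (1-p)^(k+1) * p^(N+1-(k+1)) * ((N+1).choose (k+1) : ℝ))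
        + p^(N+1) := by
    rw [Finset.sum_range_succ']
    simp
  have h4 : ∑ j ∈ Finset.Icc 1 N, (((N+1).choose j : ℝ) * p^(N+1-j) * (1-p)^j)
      = ∑ k ∈ Finset.range N, (1-p)^(k+1) * p^(N+1-(k+1)) * ((N+1).choose (k+1) : ℝ) := by
    rw [← Finset.Ico_add_one_right_eq_Icc, Finset.sum_Ico_eq_sum_range]
    refine Finset.sum_congr (by norm_num) (fun i _ => ?_)
    rw [show 1 + i = i + 1 by ring]
    ring
  rw [h4]
  rw [h2, h3] at h
  linarith

lemma wa (p : ℝ) (hp : 1/2 < p) (hp1 : p < 1) : ∀ n, w p n = strategyOne p n := by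
  intro n
  induction n using Nat.strong_induction_on with
  | _ n ih =>
    match n with
    | 0 => rw [w, strategyOne]
    | 1 =>
      rw [w, strategyOne]
      have he : ∀ j : {x // x ∈ Finset.Icc 1 0}, False := by
        intro j
        have := Finset.mem_Icc.mp j.2
        omega
      rw [Finset.sum_eq_zero (fun j _ => (he j).elim)]
      norm_num
    | (k+2) =>
      rw [w, strategyOne]
      have h1 : ∀ (j : {x // x ∈ Finset.Icc 1 (k+1)})
          (hne : (Finset.Icc j.1 (k+1)).attach.Nonempty),
          (Finset.Icc j.1 (k+1)).attach.sup' hne (fun m => w p m.1)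
            = strategyOne p (k+1) := by
        intro j hne
        apply le_antisymm
        · apply Finset.sup'_le
          intro m _
          have hm := Finset.mem_Icc.mp m.2
          rw [ih m.1 (by omega)]
          exact smono p hp hp1 m.1 (k+1)
            (le_trans (Finset.mem_Icc.mp j.2).1 hm.1) hm.2
        · have hmem : (k+1) ∈ Finset.Icc j.1 (k+1) :=
            Finset.mem_Icc.mpr ⟨(Finset.mem_Icc.mp j.2).2, le_refl _⟩
          have hle := Finset.le_sup' (f := fun m : {x // x ∈ Finset.Icc j.1 (k+1)} => w p m.1)
            (Finset.mem_attach _ ⟨k+1, hmem⟩)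
          rw [ih (k+1) (by omega)] at hle
          exact hle
      simp only [h1]
      rw [← Finset.sum_mul]
      rw [Finset.sum_attach (Finset.Icc 1 (k+1))
        (fun j => ((k+1+1).choose j : ℝ) * p ^ (k+1+1-j) * (1-p)^j)]
      rw [bsum p (k+1)]

theorem above_half (p : ℝ) (hp : 1/2 < p) (hp1 : p < 1) (n : ℕ) (hn : 2 ≤ n) :
    w p (n - 1) < w p n ∧
    w p (n - 1) < p ^ n / (p ^ n + (1 - p) ^ n) ∧
    w p n = strategyOne p n := by
  obtain ⟨m, rfl⟩ : ∃ m, n = m + 2 := ⟨n - 2, by omega⟩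
  have hsub : m + 2 - 1 = m + 1 := by omega
  have hpos : (0:ℝ) < p ^ (m+2) + (1-p) ^ (m+2) := by
    have := pow_pos (show (0:ℝ) < 1-p by linarith) (m+2)
    have := pow_pos (show (0:ℝ) < p by linarith) (m+2)
    linarith
  refine ⟨?_, ?_, wa p hp hp1 (m+2)⟩
  · rw [hsub, wa p hp hp1 (m+1), wa p hp hp1 (m+2)]
    exact sstep p hp hp1 m
  · rw [hsub, wa p hp hp1 (m+1), lt_div_iff₀ hpos]
    exact key p hp hp1 m
end

section
/- For 1/2 < p < 1 and every n ≥ 1, w_{n,p} = p^n + (1 - p^n - q^n) w_{n-1,p}, where q = 1-p and w_{0,p} = 1. -/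
lemma w_one (p : ℝ) : w p 1 = p := by
  show w p (0 + 1) = p
  rw [w]
  rw [Finset.sum_eq_zero (fun j _ => absurd (Finset.mem_Icc.mp j.2) (by omega))]
  norm_num

lemma binom_sum (p : ℝ) (n : ℕ) :
    ∑ j ∈ Finset.Icc 1 n, ((n + 1).choose j : ℝ) * p ^ (n + 1 - j) * (1 - p) ^ j
      = 1 - p ^ (n + 1) - (1 - p) ^ (n + 1) := by
  have hb := add_pow (1 - p) p (n + 1)
  rw [sub_add_cancel, one_pow] at hb
  rw [Finset.sum_range_succ, Finset.sum_range_succ'] at hb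
  have hIcc : Finset.Icc 1 n = Finset.Ico 1 (n + 1) := by
    rw [Finset.Ico_add_one_right_eq_Icc]
  rw [hIcc, Finset.sum_Ico_eq_sum_range]
  simp only [Nat.add_sub_cancel] at *
  simp only [Nat.choose_self, Nat.choose_zero_right, Nat.cast_one, pow_zero,
    Nat.sub_zero, Nat.sub_self, mul_one, one_mul] at hb
  have : ∑ i ∈ Finset.range n, ((n + 1).choose (1 + i) : ℝ) * p ^ (n + 1 - (1 + i)) * (1 - p) ^ (1 + i)
      = ∑ i ∈ Finset.range n, (1 - p) ^ (i + 1) * p ^ (n + 1 - (i + 1)) * ((n + 1).choose (i + 1) : ℝ) := by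
    apply Finset.sum_congr rfl
    intro i _
    rw [add_comm 1 i]
    ring
  rw [this]
  linarith

lemma w_succ (p : ℝ) (n : ℕ) (hn : 1 ≤ n)
    (hmono : ∀ m, 1 ≤ m → m ≤ n → w p m ≤ w p n) :
    w p (n + 1) = p ^ (n + 1) + (1 - p ^ (n + 1) - (1 - p) ^ (n + 1)) * w p n := by
  rw [w]
  congr 1
  have h1 : (∑ j ∈ (Finset.Icc 1 n).attach,
        ((n + 1).choose j.1 : ℝ) * p ^ (n + 1 - j.1) * (1 - p) ^ j.1 *
          (Finset.Icc j.1 n).attach.sup'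
            (Finset.attach_nonempty_iff.mpr
              (Finset.nonempty_Icc.mpr (Finset.mem_Icc.mp j.2).2))
            (fun m => w p m.1))
      = ∑ j ∈ (Finset.Icc 1 n).attach,
        ((n + 1).choose j.1 : ℝ) * p ^ (n + 1 - j.1) * (1 - p) ^ j.1 * w p n := by
    apply Finset.sum_congr rfl
    intro j _
    congr 1
    apply le_antisymm
    · apply Finset.sup'_le
      intro m _
      exact hmono m.1 (le_trans (Finset.mem_Icc.mp j.2).1 (Finset.mem_Icc.mp m.2).1)
        (Finset.mem_Icc.mp m.2).2
    · exact Finset.le_sup'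
        (fun m : {x // x ∈ Finset.Icc j.1 n} => w p m.1)
        (Finset.mem_attach _ ⟨n, Finset.mem_Icc.mpr ⟨(Finset.mem_Icc.mp j.2).2, le_rfl⟩⟩)
  rw [h1,
    Finset.sum_attach (Finset.Icc 1 n)
      (fun j => ((n + 1).choose j : ℝ) * p ^ (n + 1 - j) * (1 - p) ^ j * w p n),
    ← Finset.sum_mul, binom_sum]

lemma w_master (p : ℝ) (hp : 1/2 < p) (hp1 : p < 1) :
    ∀ n, 1 ≤ n → (∀ m, 1 ≤ m → m ≤ n → w p m ≤ w p n) ∧ 0 ≤ w p n ∧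
      (p ^ (n + 1) + (1 - p) ^ (n + 1)) * w p n ≤ p ^ (n + 1) := by
  have hp0 : 0 < p := by linarith
  have hq0 : 0 < 1 - p := by linarith
  have hq1 : 1 - p < 1 := by linarith
  intro n hn
  induction n with
  | zero => omega
  | succ n ih =>
    rcases Nat.lt_or_ge n 1 with h1 | hn1
    · have hn0 : n = 0 := by omega
      subst hn0
      refine ⟨?_, ?_, ?_⟩
      · intro m hm hm'
        have : m = 1 := by omega
        subst this; exact le_rfl
      · rw [w_one]; linarith
      · rw [w_one]
        have h2 : p ^ (0 + 1 + 1) = p ^ 2 := by norm_num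
        have h3 : (1 - p) ^ (0 + 1 + 1) = (1 - p) ^ 2 := by norm_num
        rw [h2, h3]
        have hle : p ^ 2 + (1 - p) ^ 2 ≤ p := by nlinarith
        calc (p ^ 2 + (1 - p) ^ 2) * p ≤ p * p := mul_le_mul_of_nonneg_right hle hp0.le
        _ = p ^ 2 := by ring
    · obtain ⟨mono, hw0, hinv⟩ := ih hn1
      set A := p ^ (n + 1) with hA
      set B := (1 - p) ^ (n + 1) with hB
      have hA0 : 0 < A := pow_pos hp0 _
      have hB0 : 0 < B := pow_pos hq0 _
      have hA1 : A ≤ p := by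
        rw [hA]
        calc p ^ (n + 1) ≤ p ^ 1 := pow_le_pow_of_le_one hp0.le hp1.le (by omega)
        _ = p := pow_one p
      have hB1 : B ≤ 1 - p := by
        rw [hB]
        calc (1 - p) ^ (n + 1) ≤ (1 - p) ^ 1 := pow_le_pow_of_le_one hq0.le hq1.le (by omega)
        _ = 1 - p := pow_one _
      have hab : A + B ≤ 1 := by linarith
      have hrec := w_succ p n hn1 mono
      have hstep : w p n ≤ w p (n + 1) := by nlinarith [hinv]
      have hw0' : 0 ≤ w p (n + 1) := le_trans hw0 hstep
      have h2 : (A + B) * w p (n + 1) ≤ A := by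
        nlinarith [mul_nonneg (by linarith : (0:ℝ) ≤ 1 - A - B)
          (by linarith : 0 ≤ A - (A + B) * w p n)]
      refine ⟨?_, hw0', ?_⟩
      · intro m hm hm'
        rcases Nat.lt_or_ge m (n + 1) with h | h
        · exact le_trans (mono m hm (by omega)) hstep
        · have : m = n + 1 := by omega
          subst this; exact le_rfl
      · have hpA : p ^ (n + 1 + 1) = p * A := by rw [hA, pow_succ]; ring
        have hpB : (1 - p) ^ (n + 1 + 1) = (1 - p) * B := by rw [hB, pow_succ]; ring
        rw [hpA, hpB]
        nlinarith [mul_nonneg (mul_nonneg (by linarith : (0:ℝ) ≤ p - (1 - p)) hB0.le) hw0',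
          mul_le_mul_of_nonneg_left h2 hp0.le]

theorem above_linear_rec (p : ℝ) (hp : 1/2 < p) (hp1 : p < 1) (n : ℕ) (hn : 1 ≤ n) :
    w p n = p ^ n + (1 - p ^ n - (1 - p) ^ n) * w p (n - 1) := by
  obtain ⟨k, rfl⟩ : ∃ k, n = k + 1 := ⟨n - 1, by omega⟩
  rcases Nat.lt_or_ge k 1 with h | hk
  · have : k = 0 := by omega
    subst this
    rw [w_one]
    norm_num [w]
  · obtain ⟨mono, -, -⟩ := w_master p hp hp1 k hk
    simpa using w_succ p k hk mono
end

section
/- For every p with 1/2 < p < 1, the limit W(p) := lim_{n→∞} w_{n,p} exists and satisfies p ≤ W(p) < 1. -/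
open Finset Filter Topology

theorem add_pow_succ_eq_add_sum_Icc {R : Type*} [CommSemiring R] (x y : R) (n : ℕ) :
    (x + y) ^ (n + 1) =
      x ^ (n + 1) + ∑ j ∈ Icc 1 n, ((n + 1).choose j : R) * x ^ (n + 1 - j) * y ^ j +
        y ^ (n + 1) := by
  rw [add_comm x, add_pow, range_eq_Ico, sum_eq_sum_Ico_succ_bot (by omega),
    sum_Ico_succ_top (by omega), Ico_add_one_right_eq_Icc]
  simp only [pow_zero, Nat.sub_zero, Nat.choose_zero_right, Nat.sub_self, Nat.choose_self,
    Nat.cast_one]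
  have hcomm : ∑ j ∈ Icc 1 n, y ^ j * x ^ (n + 1 - j) * ((n + 1).choose j : R) =
      ∑ j ∈ Icc 1 n, ((n + 1).choose j : R) * x ^ (n + 1 - j) * y ^ j :=
    sum_congr rfl fun _ _ => by ring
  rw [hcomm]
  ring

theorem pow_succ_add_one_sub_pow_succ_le_one {p : ℝ} (hp0 : 0 ≤ p) (hp1 : p ≤ 1) (n : ℕ) :
    p ^ (n + 1) + (1 - p) ^ (n + 1) ≤ 1 := by
  have hP : p ^ (n + 1) ≤ p := pow_le_of_le_one hp0 hp1 n.succ_ne_zero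
  have hQ : (1 - p) ^ (n + 1) ≤ 1 - p :=
    pow_le_of_le_one (sub_nonneg.mpr hp1) (sub_le_self 1 hp0) n.succ_ne_zero
  linarith

noncomputable def wLin (p : ℝ) : ℕ → ℝ
  | 0 => 1
  | n + 1 => p ^ (n + 1) + (1 - p ^ (n + 1) - (1 - p) ^ (n + 1)) * wLin p n

section wLin

variable {p : ℝ}

theorem wLin_one (p : ℝ) : wLin p 1 = p := by
  simp [wLin]

theorem one_sub_wLin_succ (p : ℝ) (n : ℕ) :
    1 - wLin p (n + 1) =
      (1 - p ^ (n + 1) - (1 - p) ^ (n + 1)) * (1 - wLin p n) + (1 - p) ^ (n + 1) := by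
  rw [wLin]; ring

theorem wLin_succ_sub (p : ℝ) (n : ℕ) :
    wLin p (n + 1) - wLin p n =
      p ^ (n + 1) * (1 - wLin p n) - (1 - p) ^ (n + 1) * wLin p n := by
  rw [wLin]; ring

theorem wLin_mem_Icc (hp0 : 0 ≤ p) (hp1 : p ≤ 1) (n : ℕ) : wLin p n ∈ Set.Icc 0 1 := by
  induction n with
  | zero => simp [wLin]
  | succ n ih =>
    have hc := pow_succ_add_one_sub_pow_succ_le_one hp0 hp1 n
    have hP : 0 ≤ p ^ (n + 1) := by positivity
    have hQ : 0 ≤ (1 - p) ^ (n + 1) := pow_nonneg (sub_nonneg.mpr hp1) _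
    constructor
    · rw [wLin]; nlinarith [ih.1]
    · nlinarith [one_sub_wLin_succ p n, ih.2]

theorem wLin_lt_one (hp0 : 0 ≤ p) (hp1 : p < 1) {n : ℕ} (hn : n ≠ 0) : wLin p n < 1 := by
  obtain ⟨n, rfl⟩ := Nat.exists_eq_succ_of_ne_zero hn
  have hc := pow_succ_add_one_sub_pow_succ_le_one hp0 hp1.le n
  have hQ : 0 < (1 - p) ^ (n + 1) := pow_pos (sub_pos.mpr hp1) _
  nlinarith [one_sub_wLin_succ p n, (wLin_mem_Icc hp0 hp1.le n).2]

theorem one_sub_mul_gap_le_wLin_succ_sub (hp : 1 / 2 ≤ p) (hp1 : p ≤ 1) (n : ℕ) :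
    (1 - p) * (p ^ n * (1 - wLin p n) - (1 - p) ^ n * wLin p n) ≤
      wLin p (n + 1) - wLin p n := by
  have hv := wLin_mem_Icc (by linarith) hp1 n
  have hqp : (1 - p) * (p ^ n * (1 - wLin p n)) ≤ p * (p ^ n * (1 - wLin p n)) :=
    mul_le_mul_of_nonneg_right (by linarith) (mul_nonneg (by positivity) (sub_nonneg.mpr hv.2))
  rw [wLin_succ_sub]
  linear_combination hqp

theorem one_sub_pow_mul_wLin_le (hp : 1 / 2 ≤ p) (hp1 : p ≤ 1) {n : ℕ} (hn : 1 ≤ n) :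
    (1 - p) ^ n * wLin p n ≤ p ^ n * (1 - wLin p n) := by
  induction n, hn using Nat.le_induction with
  | base => simp [wLin_one, mul_comm]
  | succ n hn ih =>
    have hc := pow_succ_add_one_sub_pow_succ_le_one (by linarith) hp1 n
    have hgap_succ :
        p ^ (n + 1) * (1 - wLin p (n + 1)) - (1 - p) ^ (n + 1) * wLin p (n + 1) =
          (1 - p ^ (n + 1) - (1 - p) ^ (n + 1)) * (wLin p (n + 1) - wLin p n) := by
      rw [wLin]; ring
    have hincr : 0 ≤ wLin p (n + 1) - wLin p n :=
      (mul_nonneg (by linarith) (sub_nonneg.mpr ih)).trans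
        (one_sub_mul_gap_le_wLin_succ_sub hp hp1 n)
    nlinarith

theorem monotoneOn_wLin (hp : 1 / 2 ≤ p) (hp1 : p ≤ 1) : MonotoneOn (wLin p) (Set.Ici 1) :=
  monotoneOn_nat_Ici_of_le_succ fun n hn => by
    have hincr := one_sub_mul_gap_le_wLin_succ_sub hp hp1 n
    have hgap := mul_nonneg (by linarith : 0 ≤ 1 - p)
      (sub_nonneg.mpr (one_sub_pow_mul_wLin_le hp hp1 hn))
    linarith

theorem exists_tendsto_wLin (hp0 : 0 ≤ p) (hp1 : p ≤ 1)
    (hmono : MonotoneOn (wLin p) (Set.Ici 1)) : ∃ W, Tendsto (wLin p) atTop (𝓝 W) := by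
  have hbdd : BddAbove (Set.range fun n => wLin p (n + 1)) :=
    ⟨1, Set.forall_mem_range.mpr fun n => (wLin_mem_Icc hp0 hp1 _).2⟩
  have hshift : Monotone fun n => wLin p (n + 1) :=
    monotone_nat_of_le_succ fun n => hmono (by simp) (by simp) (by omega)
  exact ⟨_, (tendsto_add_atTop_iff_nat 1).mp (tendsto_atTop_ciSup hshift hbdd)⟩

theorem wLin_le_add_tail (hp0 : 0 ≤ p) (hp1 : p < 1) (hmono : MonotoneOn (wLin p) (Set.Ici 1))
    {m N : ℕ} (hm : 1 ≤ m) (hmN : m ≤ N) :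
    wLin p N ≤ wLin p m + (1 - wLin p m) * (p ^ (m + 1) / (1 - p)) := by
  have htel : wLin p N - wLin p m ≤ (1 - wLin p m) * ∑ k ∈ Ico m N, p ^ (k + 1) := by
    induction N, hmN using Nat.le_induction with
    | base => simp
    | succ N hmN ih =>
      have hvm : wLin p m ≤ wLin p N := hmono hm (hm.trans hmN) hmN
      have hstep : wLin p (N + 1) - wLin p N ≤ p ^ (N + 1) * (1 - wLin p m) := by
        have hQ := mul_nonneg (pow_nonneg (sub_nonneg.mpr hp1.le) (N + 1))
          (wLin_mem_Icc hp0 hp1.le N).1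
        rw [wLin_succ_sub]
        nlinarith [pow_nonneg hp0 (N + 1)]
      rw [sum_Ico_succ_top hmN]
      linarith
  have hgeom : ∑ k ∈ Ico m N, p ^ (k + 1) ≤ p ^ (m + 1) / (1 - p) :=
    calc ∑ k ∈ Ico m N, p ^ (k + 1) = p * ∑ k ∈ Ico m N, p ^ k := by
          simp only [mul_sum, pow_succ']
      _ ≤ p * (p ^ m / (1 - p)) := by gcongr; exact geom_sum_Ico_le_of_lt_one hp0 hp1
      _ = p ^ (m + 1) / (1 - p) := by rw [pow_succ', mul_div_assoc]
  nlinarith [(wLin_mem_Icc hp0 hp1.le m).2]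

end wLin

theorem w_succ_of_le {p : ℝ} {n : ℕ} (h : ∀ m ∈ Icc 1 n, w p m ≤ w p n) :
    w p (n + 1) = p ^ (n + 1) + (1 - p ^ (n + 1) - (1 - p) ^ (n + 1)) * w p n := by
  have hsup (j : Icc 1 n) : (Icc j.1 n).attach.sup'
      (attach_nonempty_iff.mpr (nonempty_Icc.mpr (mem_Icc.mp j.2).2)) (fun m => w p m.1) =
      w p n := by
    have hj := mem_Icc.mp j.2
    refine le_antisymm (sup'_le _ _ fun m _ => h m ?_) ?_
    · have hm := mem_Icc.mp m.2
      exact mem_Icc.mpr ⟨hj.1.trans hm.1, hm.2⟩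
    · exact le_sup' (fun m : Icc j.1 n => w p m.1) (mem_attach _ ⟨n, right_mem_Icc.mpr hj.2⟩)
  have hbinom := add_pow_succ_eq_add_sum_Icc p (1 - p) n
  rw [add_sub_cancel, one_pow] at hbinom
  rw [w, sum_congr rfl fun j _ => by rw [hsup j], ← sum_mul,
    sum_attach (Icc 1 n) fun j => ((n + 1).choose j : ℝ) * p ^ (n + 1 - j) * (1 - p) ^ j]
  linear_combination -w p n * hbinom

theorem w_eq_wLin {p : ℝ} (hmono : MonotoneOn (wLin p) (Set.Ici 1)) : w p = wLin p := by
  funext n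
  induction n using Nat.strong_induction_on with
  | _ n ih =>
    match n with
    | 0 => simp [w, wLin]
    | n + 1 =>
      rw [w_succ_of_le, wLin, ih n n.lt_succ_self]
      intro m hm
      have hm := mem_Icc.mp hm
      rw [ih m (by omega), ih n n.lt_succ_self]
      exact hmono hm.1 (hm.1.trans hm.2) hm.2

theorem above_limit_exists (p : ℝ) (hp : 1/2 < p) (hp1 : p < 1) :
    ∃ W : ℝ, Filter.Tendsto (w p) Filter.atTop (nhds W) ∧ p ≤ W ∧ W < 1 := by
  have hp0 : 0 ≤ p := by linarith
  have hmono := monotoneOn_wLin hp.le hp1.le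
  obtain ⟨W, hW⟩ := exists_tendsto_wLin hp0 hp1.le hmono
  refine ⟨W, w_eq_wLin hmono ▸ hW, ?_, ?_⟩
  · refine ge_of_tendsto hW (eventually_atTop.mpr ⟨1, fun n hn => ?_⟩)
    simpa only [wLin_one] using hmono (Set.mem_Ici.mpr le_rfl) hn hn
  · obtain ⟨m, hm⟩ := exists_pow_lt_of_lt_one (sub_pos.mpr hp1) hp1
    have hratio : p ^ (m + 1 + 1) / (1 - p) < 1 := by
      rw [div_lt_one (sub_pos.mpr hp1)]
      exact (pow_le_pow_of_le_one hp0 hp1.le (by omega)).trans_lt hm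
    have hgap : 0 < 1 - wLin p (m + 1) := sub_pos.mpr (wLin_lt_one hp0 hp1 m.succ_ne_zero)
    calc W ≤ wLin p (m + 1) + (1 - wLin p (m + 1)) * (p ^ (m + 1 + 1) / (1 - p)) :=
          le_of_tendsto hW (eventually_atTop.mpr
            ⟨m + 1, fun N hN => wLin_le_add_tail hp0 hp1 hmono (by omega) hN⟩)
      _ < wLin p (m + 1) + (1 - wLin p (m + 1)) * 1 := by gcongr
      _ = 1 := by ring
end

section
/- For 1/2 < p < 1, the limit W(p) = lim_{n→∞} w_{n,p} equals the absolutely convergent series Σ_{k=1}^∞ p^k ∏_{j=k+1}^∞ (1 - p^j - q^j), where q = 1-p. -/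
/-!
Once `w p` is known to be nondecreasing from `n = 1` on, every suffix maximum in its Bellman
recursion equals `w p n`, and the binomial theorem turns the recursion into the linear one
`w (n+1) = p^(n+1) + (1 - p^(n+1) - q^(n+1)) w n`. Monotonicity holds because `w n` stays below
`p^(n+1) / (p^(n+1) + q^(n+1))`, the fixed point of the `n`-th step, and these fixed points
increase with `n` exactly because `q ≤ p`. Unrolling the linear recursion gives
`w n = ∑_{k<n} p^(k+1) ∏_{j=k+2}^{n} (1 - p^j - q^j)`; the `k`-th term converges to the `k`-th term
of the series and is bounded by `p^(k+1)`, so Tannery's theorem identifies the limit.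
-/

open Filter Finset Topology

theorem sum_Icc_choose_mul_pow_mul_pow {R : Type*} [CommRing R] (x y : R) (n : ℕ) :
    ∑ j ∈ Icc 1 n, ((n + 1).choose j : R) * x ^ (n + 1 - j) * y ^ j
      = (x + y) ^ (n + 1) - x ^ (n + 1) - y ^ (n + 1) := by
  have hsplit : range (n + 2) = insert 0 (insert (n + 1) (Icc 1 n)) := by
    ext; simp only [mem_range, mem_insert, mem_Icc]; omega
  rw [add_comm x y, add_pow, hsplit, sum_insert (by simp), sum_insert (by simp)]
  simp only [pow_zero, Nat.sub_zero, Nat.choose_zero_right, Nat.cast_one, mul_one, one_mul,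
    Nat.sub_self, Nat.choose_self]
  rw [add_sub_cancel_left, add_sub_cancel_left]
  exact sum_congr rfl fun j _ => by ring

theorem HasProd.tendsto_prod_Ico {M : Type*} [CommMonoid M] [TopologicalSpace M] {f : ℕ → M}
    {a : M} {m : ℕ} (h : HasProd (fun i => f (m + i)) a) :
    Tendsto (fun n => ∏ j ∈ Ico m n, f j) atTop (𝓝 a) := by
  simp only [prod_Ico_eq_prod_range]
  exact h.tendsto_prod_nat.comp (tendsto_sub_atTop_nat m)

theorem tendsto_sum_range_of_dominated_convergence {G : Type*} [NormedAddCommGroup G]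
    [CompleteSpace G] {F : ℕ → ℕ → G} {g : ℕ → G} {bound : ℕ → ℝ} (h_sum : Summable bound)
    (h_lim : ∀ k, Tendsto (F · k) atTop (𝓝 (g k))) (h_bound : ∀ n k, ‖F n k‖ ≤ bound k) :
    Tendsto (fun n => ∑ k ∈ range n, F n k) atTop (𝓝 (∑' k, g k)) := by
  have hrange : ∀ n, ∑ k ∈ range n, F n k = ∑' k, if k < n then F n k else 0 := fun n => by
    rw [tsum_eq_sum (s := range n) fun k hk => if_neg (by simpa using hk)]
    exact sum_congr rfl fun k hk => (if_pos (mem_range.mp hk)).symm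
  simp only [hrange]
  refine tendsto_tsum_of_dominated_convergence h_sum (fun k => ?_) (.of_forall fun n k => ?_)
  · exact (h_lim k).congr' ((eventually_gt_atTop k).mono fun n hn => (if_pos hn).symm)
  · split_ifs
    · exact h_bound n k
    · simpa using (norm_nonneg _).trans (h_bound n k)

def splitProb (p : ℝ) (j : ℕ) : ℝ := 1 - p ^ j - (1 - p) ^ j

/-- The linear recursion left once the suffix maxima in `w` collapse. Starting from `0` rather
than `1` makes it monotone from the start and changes nothing for `n ≥ 1`,
as `splitProb p 1 = 0`. -/
def collapsedW (p : ℝ) : ℕ → ℝ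
  | 0 => 0
  | n + 1 => p ^ (n + 1) + splitProb p (n + 1) * collapsedW p n

section

variable {p : ℝ}

theorem splitProb_one : splitProb p 1 = 0 := by
  simp [splitProb]

theorem splitProb_nonneg (hp₀ : 0 ≤ p) (hp₁ : p ≤ 1) {j : ℕ} (hj : j ≠ 0) :
    0 ≤ splitProb p j := by
  have hpj := pow_le_of_le_one hp₀ hp₁ hj
  have hqj := pow_le_of_le_one (sub_nonneg.2 hp₁) (by linarith) hj
  unfold splitProb; linarith

theorem splitProb_le_one (hp₀ : 0 ≤ p) (hp₁ : p ≤ 1) (j : ℕ) : splitProb p j ≤ 1 := by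
  have hpj := pow_nonneg hp₀ j
  have hqj := pow_nonneg (sub_nonneg.2 hp₁) j
  unfold splitProb; linarith

theorem norm_prod_splitProb_le_one (hp₀ : 0 ≤ p) (hp₁ : p ≤ 1) {s : Finset ℕ}
    (hs : 0 ∉ s) : ‖∏ j ∈ s, splitProb p j‖ ≤ 1 := by
  have hj : ∀ j ∈ s, j ≠ 0 := fun j hj h => hs (h ▸ hj)
  rw [Real.norm_of_nonneg (prod_nonneg fun j h => splitProb_nonneg hp₀ hp₁ (hj j h))]
  exact prod_le_one (fun j h => splitProb_nonneg hp₀ hp₁ (hj j h))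
    fun j _ => splitProb_le_one hp₀ hp₁ j

theorem multipliable_splitProb_add (hp₀ : 0 < p) (hp₁ : p < 1) (m : ℕ) :
    Multipliable fun j => splitProb p (m + j) := by
  have hgeom : Summable fun j => p ^ (m + j) + (1 - p) ^ (m + j) := by
    simp only [pow_add]
    exact ((summable_geometric_of_lt_one hp₀.le hp₁).mul_left _).add
      ((summable_geometric_of_lt_one (by linarith) (by linarith)).mul_left _)
  refine (Real.multipliable_one_add_of_summable hgeom.neg).congr fun j => ?_
  simp only [splitProb]
  ring

theorem w_succ_of_forall_le {n : ℕ} (hmax : ∀ m ∈ Icc 1 n, w p m ≤ w p n) :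
    w p (n + 1) = p ^ (n + 1) + splitProb p (n + 1) * w p n := by
  rw [w]
  congr 1
  have hsup : ∀ j : Icc 1 n,
      (Icc j.1 n).attach.sup'
        (attach_nonempty_iff.mpr (nonempty_Icc.mpr (mem_Icc.mp j.2).2))
        (fun m => w p m.1) = w p n := by
    rintro ⟨j, hj⟩
    refine le_antisymm (sup'_le _ _ fun m _ => hmax m ?_) (le_sup' (fun m : Icc j n => w p m.1)
      (mem_attach _ ⟨n, right_mem_Icc.mpr (mem_Icc.mp hj).2⟩))
    obtain ⟨hjm, hmn⟩ := mem_Icc.mp m.2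
    exact mem_Icc.mpr ⟨(mem_Icc.mp hj).1.trans hjm, hmn⟩
  simp only [hsup]
  rw [sum_attach (Icc 1 n)
      (fun j => ((n + 1).choose j : ℝ) * p ^ (n + 1 - j) * (1 - p) ^ j * w p n), ← sum_mul,
    sum_Icc_choose_mul_pow_mul_pow, add_sub_cancel, one_pow]
  rfl

theorem collapsedW_nonneg (hp₀ : 0 ≤ p) (hp₁ : p ≤ 1) (n : ℕ) : 0 ≤ collapsedW p n := by
  induction n with
  | zero => exact le_rfl
  | succ n ih =>
    exact add_nonneg (pow_nonneg hp₀ _) (mul_nonneg (splitProb_nonneg hp₀ hp₁ n.succ_ne_zero) ih)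

theorem collapsedW_mul_le (hp : 1 / 2 ≤ p) (hp₁ : p ≤ 1) (n : ℕ) :
    collapsedW p n * (p ^ (n + 1) + (1 - p) ^ (n + 1)) ≤ p ^ (n + 1) := by
  have hp₀ : 0 ≤ p := by linarith
  induction n with
  | zero => simpa [collapsedW] using hp₀
  | succ n ih =>
    set s := p ^ (n + 1) + (1 - p) ^ (n + 1)
    -- `p ^ (n + 1) / s` is the fixed point of `x ↦ p ^ (n + 1) + (1 - s) * x`.
    have hfix : collapsedW p (n + 1) * s ≤ p ^ (n + 1) := by
      have hc : splitProb p (n + 1) = 1 - s := by unfold splitProb s; ring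
      have hc₀ : 0 ≤ 1 - s := hc ▸ splitProb_nonneg hp₀ hp₁ n.succ_ne_zero
      rw [collapsedW, hc]
      linarith [mul_le_mul_of_nonneg_left ih hc₀]
    have hs : p ^ (n + 2) + (1 - p) ^ (n + 2) ≤ p * s := by
      have hq : (1 - p) ^ (n + 1) * (1 - p) ≤ (1 - p) ^ (n + 1) * p :=
        mul_le_mul_of_nonneg_left (by linarith) (pow_nonneg (sub_nonneg.2 hp₁) _)
      rw [pow_succ p (n + 1), pow_succ (1 - p) (n + 1)]
      linarith
    calc collapsedW p (n + 1) * (p ^ (n + 2) + (1 - p) ^ (n + 2))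
        ≤ collapsedW p (n + 1) * (p * s) :=
          mul_le_mul_of_nonneg_left hs (collapsedW_nonneg hp₀ hp₁ _)
      _ = p * (collapsedW p (n + 1) * s) := by ring
      _ ≤ p * p ^ (n + 1) := mul_le_mul_of_nonneg_left hfix hp₀
      _ = p ^ (n + 2) := by ring

theorem collapsedW_monotone (hp : 1 / 2 ≤ p) (hp₁ : p ≤ 1) : Monotone (collapsedW p) :=
  monotone_nat_of_le_succ fun n => by
    have := collapsedW_mul_le hp hp₁ n
    rw [collapsedW, splitProb]
    nlinarith

theorem w_succ_eq_collapsedW_succ (hp : 1 / 2 ≤ p) (hp₁ : p ≤ 1) (n : ℕ) :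
    w p (n + 1) = collapsedW p (n + 1) := by
  induction n using Nat.strong_induction_on with
  | _ n ih =>
  have hmax : ∀ m ∈ Icc 1 n, w p m ≤ w p n := by
    intro m hm
    obtain ⟨hm₁, hmn⟩ := mem_Icc.mp hm
    obtain ⟨i, rfl⟩ := Nat.exists_eq_add_of_le' hm₁
    obtain ⟨k, rfl⟩ := Nat.exists_eq_add_of_le' (hm₁.trans hmn)
    rw [ih i (by omega), ih k (by omega)]
    exact collapsedW_monotone hp hp₁ hmn
  rw [w_succ_of_forall_le hmax, collapsedW]
  rcases n with _ | n
  · simp [splitProb_one]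
  · rw [ih n n.lt_succ_self]

theorem collapsedW_eq_sum (n : ℕ) :
    collapsedW p n = ∑ k ∈ range n, p ^ (k + 1) * ∏ j ∈ Ico (k + 2) (n + 1), splitProb p j := by
  induction n with
  | zero => rfl
  | succ n ih =>
    rw [collapsedW, ih, sum_range_succ, Ico_self, prod_empty, mul_one, mul_sum, add_comm]
    congr 1
    refine sum_congr rfl fun k hk => ?_
    rw [prod_Ico_succ_top (a := k + 2) (b := n + 1) (by have := mem_range.mp hk; omega)]
    ring

end

theorem above_limit_formula (p : ℝ) (hp : 1/2 < p) (hp1 : p < 1) :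
    Summable (fun k : ℕ =>
      p ^ (k + 1) * ∏' j : ℕ, (1 - p ^ (k + 2 + j) - (1 - p) ^ (k + 2 + j))) ∧
    Filter.Tendsto (w p) Filter.atTop (nhds
      (∑' k : ℕ,
        p ^ (k + 1) * ∏' j : ℕ, (1 - p ^ (k + 2 + j) - (1 - p) ^ (k + 2 + j)))) := by
  have hp₀ : 0 < p := by linarith
  have hgeom : Summable fun k : ℕ => p ^ (k + 1) :=
    (summable_nat_add_iff 1).mpr (summable_geometric_of_lt_one hp₀.le hp1)
  have h_lim : ∀ k, Tendsto (fun n => p ^ (k + 1) * ∏ j ∈ Ico (k + 2) (n + 1), splitProb p j)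
      atTop (𝓝 (p ^ (k + 1) * ∏' j, splitProb p (k + 2 + j))) := fun k =>
    (((multipliable_splitProb_add hp₀ hp1 (k + 2)).hasProd.tendsto_prod_Ico).comp
      (tendsto_add_atTop_nat 1)).const_mul _
  have h_bound : ∀ n k, ‖p ^ (k + 1) * ∏ j ∈ Ico (k + 2) (n + 1), splitProb p j‖ ≤ p ^ (k + 1) :=
    fun n k => by
      rw [norm_mul, norm_pow, Real.norm_of_nonneg hp₀.le]
      exact mul_le_of_le_one_right (by positivity)
        (norm_prod_splitProb_le_one hp₀.le hp1.le (by simp))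
  refine ⟨hgeom.of_norm_bounded fun k => le_of_tendsto' (h_lim k).norm fun n => h_bound n k, ?_⟩
  rw [← tendsto_add_atTop_iff_nat 1]
  simp only [w_succ_eq_collapsedW_succ hp.le hp1.le, collapsedW_eq_sum]
  exact (tendsto_sum_range_of_dominated_convergence hgeom h_lim h_bound).comp
    (tendsto_add_atTop_nat 1)
end

section
/- For 0 < p < 1/2, w_{n,p} < 1/2 for every n ≥ 1; and for 1/2 < p < 1, w_{n,p} > 1/2 for every n ≥ 1. -/
lemma key_s10 (p : ℝ) (n : ℕ) :
    ∑ j ∈ Finset.Icc 1 n, ((n+1).choose j : ℝ) * p^(n+1-j) * (1-p)^j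
      = 1 - p^(n+1) - (1-p)^(n+1) := by
  have h : ((1-p) + p)^(n+1) = ∑ k ∈ Finset.range (n+2),
      (1-p)^k * p^(n+1-k) * ((n+1).choose k : ℝ) := add_pow (1-p) p (n+1)
  rw [sub_add_cancel, one_pow, Finset.sum_range_succ, Finset.sum_range_succ'] at h
  simp only [Nat.choose_self, Nat.choose_zero_right, Nat.cast_one, pow_zero,
    Nat.sub_self, mul_one, one_mul, Nat.sub_zero] at h
  rw [← Finset.Ico_add_one_right_eq_Icc, Finset.sum_Ico_eq_sum_range]
  norm_num
  have : ∀ i ∈ Finset.range n, ((n+1).choose (1+i) : ℝ) * p^(n+1-(1+i)) * (1-p)^(1+i)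
      = (1-p)^(i+1) * p^(n+1-(i+1)) * ((n+1).choose (i+1) : ℝ) := by
    intro i _
    rw [Nat.add_comm 1 i]
    ring
  rw [Finset.sum_congr rfl this]
  linarith [h]

lemma upper (p : ℝ) (hp0 : 0 < p) (hp : p < 1/2) : ∀ n, 1 ≤ n → w p n < 1/2 := by
  intro n
  induction n using Nat.strong_induction_on with
  | _ n ih =>
    intro hn
    obtain ⟨m, rfl⟩ := Nat.exists_eq_add_of_le hn
    rw [Nat.add_comm, w]
    have hq0 : (0:ℝ) < 1 - p := by linarith
    have hsum : ∑ j ∈ (Finset.Icc 1 m).attach,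
        ((m + 1).choose j.1 : ℝ) * p ^ (m + 1 - j.1) * (1 - p) ^ j.1 *
          (Finset.Icc j.1 m).attach.sup'
            (Finset.attach_nonempty_iff.mpr
              (Finset.nonempty_Icc.mpr (Finset.mem_Icc.mp j.2).2))
            (fun m' => w p m'.1)
        ≤ ∑ j ∈ (Finset.Icc 1 m).attach,
        ((m + 1).choose j.1 : ℝ) * p ^ (m + 1 - j.1) * (1 - p) ^ j.1 * (1/2) := by
      apply Finset.sum_le_sum
      intro j _
      apply mul_le_mul_of_nonneg_left
      · apply Finset.sup'_le
        intro m' _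
        have hm1 : 1 ≤ m'.1 := le_trans (Finset.mem_Icc.mp j.2).1 (Finset.mem_Icc.mp m'.2).1
        have hm2 : m'.1 ≤ m := (Finset.mem_Icc.mp m'.2).2
        exact le_of_lt (ih m'.1 (by omega) hm1)
      · positivity
    have h2 : ∑ j ∈ (Finset.Icc 1 m).attach,
        ((m + 1).choose j.1 : ℝ) * p ^ (m + 1 - j.1) * (1 - p) ^ j.1 * (1/2)
        = (1 - p^(m+1) - (1-p)^(m+1)) * (1/2) := by
      rw [Finset.sum_attach (Finset.Icc 1 m)
        (fun j => ((m + 1).choose j : ℝ) * p ^ (m + 1 - j) * (1 - p) ^ j * (1/2)),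
        ← Finset.sum_mul, key_s10]
    have hpq : p^(m+1) < (1-p)^(m+1) := by
      apply pow_lt_pow_left₀ (by linarith) (le_of_lt hp0)
      omega
    linarith

lemma lower (p : ℝ) (hp : 1/2 < p) (hp1 : p < 1) : ∀ n, 1 ≤ n → 1/2 < w p n := by
  intro n
  induction n using Nat.strong_induction_on with
  | _ n ih =>
    intro hn
    obtain ⟨m, rfl⟩ := Nat.exists_eq_add_of_le hn
    rw [Nat.add_comm, w]
    have hp0 : (0:ℝ) < p := by linarith
    have hq0 : (0:ℝ) < 1 - p := by linarith
    have hsum : ∑ j ∈ (Finset.Icc 1 m).attach,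
        ((m + 1).choose j.1 : ℝ) * p ^ (m + 1 - j.1) * (1 - p) ^ j.1 * (1/2)
        ≤ ∑ j ∈ (Finset.Icc 1 m).attach,
        ((m + 1).choose j.1 : ℝ) * p ^ (m + 1 - j.1) * (1 - p) ^ j.1 *
          (Finset.Icc j.1 m).attach.sup'
            (Finset.attach_nonempty_iff.mpr
              (Finset.nonempty_Icc.mpr (Finset.mem_Icc.mp j.2).2))
            (fun m' => w p m'.1) := by
      apply Finset.sum_le_sum
      intro j _
      apply mul_le_mul_of_nonneg_left
      · have hj : j.1 ∈ Finset.Icc j.1 m :=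
          Finset.mem_Icc.mpr ⟨le_refl _, (Finset.mem_Icc.mp j.2).2⟩
        calc (1:ℝ)/2 ≤ w p j.1 :=
              le_of_lt (ih j.1 (by have := (Finset.mem_Icc.mp j.2).2; omega) (Finset.mem_Icc.mp j.2).1)
          _ ≤ _ := Finset.le_sup' (fun m' => w p m'.1) (Finset.mem_attach _ ⟨j.1, hj⟩)
      · positivity
    have h2 : ∑ j ∈ (Finset.Icc 1 m).attach,
        ((m + 1).choose j.1 : ℝ) * p ^ (m + 1 - j.1) * (1 - p) ^ j.1 * (1/2)
        = (1 - p^(m+1) - (1-p)^(m+1)) * (1/2) := by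
      rw [Finset.sum_attach (Finset.Icc 1 m)
        (fun j => ((m + 1).choose j : ℝ) * p ^ (m + 1 - j) * (1 - p) ^ j * (1/2)),
        ← Finset.sum_mul, key_s10]
    have hpq : (1-p)^(m+1) < p^(m+1) := by
      apply pow_lt_pow_left₀ (by linarith) (le_of_lt hq0)
      omega
    linarith

theorem w_sign (p : ℝ) (n : ℕ) (hn : 1 ≤ n) :
    (0 < p → p < 1/2 → w p n < 1/2) ∧ (1/2 < p → p < 1 → 1/2 < w p n) :=
  ⟨fun h1 h2 => upper p h1 h2 n hn, fun h1 h2 => lower p h1 h2 n hn⟩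
end

section
/- c_n ≥ 27/16 for every n ≥ 4, where (c_n) is the first-order deficit coefficient sequence. -/
def c : ℕ → ℚ
  | 0 => 0
  | 1 => 1
  | n + 2 =>
    (n + 2 : ℚ) / 2 ^ (n + 1) +
      (1 / 2 ^ (n + 2)) *
        ∑ j ∈ (Finset.Icc 1 (n + 1)).attach,
          ((n + 2).choose j.1 : ℚ) *
            (Finset.Icc j.1 (n + 1)).attach.inf'
              (Finset.attach_nonempty_iff.mpr
                (Finset.nonempty_Icc.mpr (Finset.mem_Icc.mp j.2).2))
              (fun m => c m.1)
  decreasing_by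
    exact Nat.lt_succ_of_le (Finset.mem_Icc.mp m.2).2

noncomputable def mc (j k : ℕ) : ℚ :=
  if h : j ≤ k then (Finset.Icc j k).inf' (Finset.nonempty_Icc.mpr h) c else 0

lemma inf'_attach' (s : Finset ℕ) (h : s.Nonempty) (h2 : s.attach.Nonempty) (f : ℕ → ℚ) :
    s.attach.inf' h2 (fun m => f m.1) = s.inf' h f := by
  apply le_antisymm
  · exact Finset.le_inf' _ _ (fun b hb => Finset.inf'_le _ (Finset.mem_attach _ ⟨b, hb⟩))
  · exact Finset.le_inf' _ _ (fun x _ => Finset.inf'_le _ x.2)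

lemma c_eq (n : ℕ) : c (n+2) = (n + 2 : ℚ) / 2 ^ (n + 1) +
    (1 / 2 ^ (n + 2)) * ∑ j ∈ Finset.Icc 1 (n + 1), ((n + 2).choose j : ℚ) * mc j (n+1) := by
  rw [c]
  congr 1
  congr 1
  rw [← Finset.sum_attach (Finset.Icc 1 (n+1)) (fun j => ((n + 2).choose j : ℚ) * mc j (n+1))]
  refine Finset.sum_congr rfl fun j _ => ?_
  congr 1
  rw [inf'_attach' _ (Finset.nonempty_Icc.mpr (Finset.mem_Icc.mp j.2).2)]
  rw [mc, dif_pos (Finset.mem_Icc.mp j.2).2]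

lemma c1 : c 1 = 1 := by simp [c]

lemma mc_ge {j k : ℕ} {q : ℚ} (hjk : j ≤ k) (h : ∀ x, j ≤ x → x ≤ k → q ≤ c x) : q ≤ mc j k := by
  rw [mc, dif_pos hjk]
  exact Finset.le_inf' _ _ (fun b hb => h b (Finset.mem_Icc.mp hb).1 (Finset.mem_Icc.mp hb).2)

lemma cge2 : (3/2 : ℚ) ≤ c 2 := by
  have e := c_eq 0
  norm_num [Finset.sum_Icc_succ_top, Nat.choose] at e
  rw [e]
  have h1 : (1 : ℚ) ≤ mc 1 1 := by
    refine mc_ge (by norm_num) fun x hx1 hx2 => ?_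
    interval_cases x
    exacts [c1.ge]
  linarith

lemma cge3 : (27/16 : ℚ) ≤ c 3 := by
  have e := c_eq 1
  norm_num [Finset.sum_Icc_succ_top, Nat.choose] at e
  rw [e]
  have h1 : (1 : ℚ) ≤ mc 1 2 := by
    refine mc_ge (by norm_num) fun x hx1 hx2 => ?_
    interval_cases x
    exacts [c1.ge, le_trans (by norm_num) cge2]
  have h2 : (3/2 : ℚ) ≤ mc 2 2 := by
    refine mc_ge (by norm_num) fun x hx1 hx2 => ?_
    interval_cases x
    exacts [le_trans (by norm_num) cge2]
  linarith

lemma cge4 : (111/64 : ℚ) ≤ c 4 := by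
  have e := c_eq 2
  norm_num [Finset.sum_Icc_succ_top, Nat.choose] at e
  rw [e]
  have h1 : (1 : ℚ) ≤ mc 1 3 := by
    refine mc_ge (by norm_num) fun x hx1 hx2 => ?_
    interval_cases x
    exacts [c1.ge, le_trans (by norm_num) cge2, le_trans (by norm_num) cge3]
  have h2 : (3/2 : ℚ) ≤ mc 2 3 := by
    refine mc_ge (by norm_num) fun x hx1 hx2 => ?_
    interval_cases x
    exacts [le_trans (by norm_num) cge2, le_trans (by norm_num) cge3]
  have h3 : (27/16 : ℚ) ≤ mc 3 3 := by
    refine mc_ge (by norm_num) fun x hx1 hx2 => ?_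
    interval_cases x
    exacts [le_trans (by norm_num) cge3]
  linarith

lemma cge5 : (3555/2048 : ℚ) ≤ c 5 := by
  have e := c_eq 3
  norm_num [Finset.sum_Icc_succ_top, Nat.choose] at e
  rw [e]
  have h1 : (1 : ℚ) ≤ mc 1 4 := by
    refine mc_ge (by norm_num) fun x hx1 hx2 => ?_
    interval_cases x
    exacts [c1.ge, le_trans (by norm_num) cge2, le_trans (by norm_num) cge3, le_trans (by norm_num) cge4]
  have h2 : (3/2 : ℚ) ≤ mc 2 4 := by
    refine mc_ge (by norm_num) fun x hx1 hx2 => ?_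
    interval_cases x
    exacts [le_trans (by norm_num) cge2, le_trans (by norm_num) cge3, le_trans (by norm_num) cge4]
  have h3 : (27/16 : ℚ) ≤ mc 3 4 := by
    refine mc_ge (by norm_num) fun x hx1 hx2 => ?_
    interval_cases x
    exacts [le_trans (by norm_num) cge3, le_trans (by norm_num) cge4]
  have h4 : (111/64 : ℚ) ≤ mc 4 4 := by
    refine mc_ge (by norm_num) fun x hx1 hx2 => ?_
    interval_cases x
    exacts [le_trans (by norm_num) cge4]
  linarith

lemma cge6 : (113337/65536 : ℚ) ≤ c 6 := by
  have e := c_eq 4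
  norm_num [Finset.sum_Icc_succ_top, Nat.choose] at e
  rw [e]
  have h1 : (1 : ℚ) ≤ mc 1 5 := by
    refine mc_ge (by norm_num) fun x hx1 hx2 => ?_
    interval_cases x
    exacts [c1.ge, le_trans (by norm_num) cge2, le_trans (by norm_num) cge3, le_trans (by norm_num) cge4, le_trans (by norm_num) cge5]
  have h2 : (3/2 : ℚ) ≤ mc 2 5 := by
    refine mc_ge (by norm_num) fun x hx1 hx2 => ?_
    interval_cases x
    exacts [le_trans (by norm_num) cge2, le_trans (by norm_num) cge3, le_trans (by norm_num) cge4, le_trans (by norm_num) cge5]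
  have h3 : (27/16 : ℚ) ≤ mc 3 5 := by
    refine mc_ge (by norm_num) fun x hx1 hx2 => ?_
    interval_cases x
    exacts [le_trans (by norm_num) cge3, le_trans (by norm_num) cge4, le_trans (by norm_num) cge5]
  have h4 : (111/64 : ℚ) ≤ mc 4 5 := by
    refine mc_ge (by norm_num) fun x hx1 hx2 => ?_
    interval_cases x
    exacts [le_trans (by norm_num) cge4, le_trans (by norm_num) cge5]
  have h5 : (3555/2048 : ℚ) ≤ mc 5 5 := by
    refine mc_ge (by norm_num) fun x hx1 hx2 => ?_
    interval_cases x
    exacts [le_trans (by norm_num) cge5]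
  linarith

lemma cge7 : (14451591/8388608 : ℚ) ≤ c 7 := by
  have e := c_eq 5
  norm_num [Finset.sum_Icc_succ_top, Nat.choose] at e
  rw [e]
  have h1 : (1 : ℚ) ≤ mc 1 6 := by
    refine mc_ge (by norm_num) fun x hx1 hx2 => ?_
    interval_cases x
    exacts [c1.ge, le_trans (by norm_num) cge2, le_trans (by norm_num) cge3, le_trans (by norm_num) cge4, le_trans (by norm_num) cge5, le_trans (by norm_num) cge6]
  have h2 : (3/2 : ℚ) ≤ mc 2 6 := by
    refine mc_ge (by norm_num) fun x hx1 hx2 => ?_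
    interval_cases x
    exacts [le_trans (by norm_num) cge2, le_trans (by norm_num) cge3, le_trans (by norm_num) cge4, le_trans (by norm_num) cge5, le_trans (by norm_num) cge6]
  have h3 : (27/16 : ℚ) ≤ mc 3 6 := by
    refine mc_ge (by norm_num) fun x hx1 hx2 => ?_
    interval_cases x
    exacts [le_trans (by norm_num) cge3, le_trans (by norm_num) cge4, le_trans (by norm_num) cge5, le_trans (by norm_num) cge6]
  have h4 : (113337/65536 : ℚ) ≤ mc 4 6 := by
    refine mc_ge (by norm_num) fun x hx1 hx2 => ?_
    interval_cases x
    exacts [le_trans (by norm_num) cge4, le_trans (by norm_num) cge5, le_trans (by norm_num) cge6]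
  have h5 : (113337/65536 : ℚ) ≤ mc 5 6 := by
    refine mc_ge (by norm_num) fun x hx1 hx2 => ?_
    interval_cases x
    exacts [le_trans (by norm_num) cge5, le_trans (by norm_num) cge6]
  have h6 : (113337/65536 : ℚ) ≤ mc 6 6 := by
    refine mc_ge (by norm_num) fun x hx1 hx2 => ?_
    interval_cases x
    exacts [le_trans (by norm_num) cge6]
  linarith

lemma cge8 : (1843764663/1073741824 : ℚ) ≤ c 8 := by
  have e := c_eq 6
  norm_num [Finset.sum_Icc_succ_top, Nat.choose] at e
  rw [e]
  have h1 : (1 : ℚ) ≤ mc 1 7 := by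
    refine mc_ge (by norm_num) fun x hx1 hx2 => ?_
    interval_cases x
    exacts [c1.ge, le_trans (by norm_num) cge2, le_trans (by norm_num) cge3, le_trans (by norm_num) cge4, le_trans (by norm_num) cge5, le_trans (by norm_num) cge6, le_trans (by norm_num) cge7]
  have h2 : (3/2 : ℚ) ≤ mc 2 7 := by
    refine mc_ge (by norm_num) fun x hx1 hx2 => ?_
    interval_cases x
    exacts [le_trans (by norm_num) cge2, le_trans (by norm_num) cge3, le_trans (by norm_num) cge4, le_trans (by norm_num) cge5, le_trans (by norm_num) cge6, le_trans (by norm_num) cge7]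
  have h3 : (27/16 : ℚ) ≤ mc 3 7 := by
    refine mc_ge (by norm_num) fun x hx1 hx2 => ?_
    interval_cases x
    exacts [le_trans (by norm_num) cge3, le_trans (by norm_num) cge4, le_trans (by norm_num) cge5, le_trans (by norm_num) cge6, le_trans (by norm_num) cge7]
  have h4 : (14451591/8388608 : ℚ) ≤ mc 4 7 := by
    refine mc_ge (by norm_num) fun x hx1 hx2 => ?_
    interval_cases x
    exacts [le_trans (by norm_num) cge4, le_trans (by norm_num) cge5, le_trans (by norm_num) cge6, le_trans (by norm_num) cge7]
  have h5 : (14451591/8388608 : ℚ) ≤ mc 5 7 := by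
    refine mc_ge (by norm_num) fun x hx1 hx2 => ?_
    interval_cases x
    exacts [le_trans (by norm_num) cge5, le_trans (by norm_num) cge6, le_trans (by norm_num) cge7]
  have h6 : (14451591/8388608 : ℚ) ≤ mc 6 7 := by
    refine mc_ge (by norm_num) fun x hx1 hx2 => ?_
    interval_cases x
    exacts [le_trans (by norm_num) cge6, le_trans (by norm_num) cge7]
  have h7 : (14451591/8388608 : ℚ) ≤ mc 7 7 := by
    refine mc_ge (by norm_num) fun x hx1 hx2 => ?_
    interval_cases x
    exacts [le_trans (by norm_num) cge7]
  linarith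

lemma cge9 : (941650327899/549755813888 : ℚ) ≤ c 9 := by
  have e := c_eq 7
  norm_num [Finset.sum_Icc_succ_top, Nat.choose] at e
  rw [e]
  have h1 : (1 : ℚ) ≤ mc 1 8 := by
    refine mc_ge (by norm_num) fun x hx1 hx2 => ?_
    interval_cases x
    exacts [c1.ge, le_trans (by norm_num) cge2, le_trans (by norm_num) cge3, le_trans (by norm_num) cge4, le_trans (by norm_num) cge5, le_trans (by norm_num) cge6, le_trans (by norm_num) cge7, le_trans (by norm_num) cge8]
  have h2 : (3/2 : ℚ) ≤ mc 2 8 := by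
    refine mc_ge (by norm_num) fun x hx1 hx2 => ?_
    interval_cases x
    exacts [le_trans (by norm_num) cge2, le_trans (by norm_num) cge3, le_trans (by norm_num) cge4, le_trans (by norm_num) cge5, le_trans (by norm_num) cge6, le_trans (by norm_num) cge7, le_trans (by norm_num) cge8]
  have h3 : (27/16 : ℚ) ≤ mc 3 8 := by
    refine mc_ge (by norm_num) fun x hx1 hx2 => ?_
    interval_cases x
    exacts [le_trans (by norm_num) cge3, le_trans (by norm_num) cge4, le_trans (by norm_num) cge5, le_trans (by norm_num) cge6, le_trans (by norm_num) cge7, le_trans (by norm_num) cge8]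
  have h4 : (1843764663/1073741824 : ℚ) ≤ mc 4 8 := by
    refine mc_ge (by norm_num) fun x hx1 hx2 => ?_
    interval_cases x
    exacts [le_trans (by norm_num) cge4, le_trans (by norm_num) cge5, le_trans (by norm_num) cge6, le_trans (by norm_num) cge7, le_trans (by norm_num) cge8]
  have h5 : (1843764663/1073741824 : ℚ) ≤ mc 5 8 := by
    refine mc_ge (by norm_num) fun x hx1 hx2 => ?_
    interval_cases x
    exacts [le_trans (by norm_num) cge5, le_trans (by norm_num) cge6, le_trans (by norm_num) cge7, le_trans (by norm_num) cge8]
  have h6 : (1843764663/1073741824 : ℚ) ≤ mc 6 8 := by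
    refine mc_ge (by norm_num) fun x hx1 hx2 => ?_
    interval_cases x
    exacts [le_trans (by norm_num) cge6, le_trans (by norm_num) cge7, le_trans (by norm_num) cge8]
  have h7 : (1843764663/1073741824 : ℚ) ≤ mc 7 8 := by
    refine mc_ge (by norm_num) fun x hx1 hx2 => ?_
    interval_cases x
    exacts [le_trans (by norm_num) cge7, le_trans (by norm_num) cge8]
  have h8 : (1843764663/1073741824 : ℚ) ≤ mc 8 8 := by
    refine mc_ge (by norm_num) fun x hx1 hx2 => ?_
    interval_cases x
    exacts [le_trans (by norm_num) cge8]
  linarith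

lemma cge10 : (962504571896853/562949953421312 : ℚ) ≤ c 10 := by
  have e := c_eq 8
  norm_num [Finset.sum_Icc_succ_top, Nat.choose] at e
  rw [e]
  have h1 : (1 : ℚ) ≤ mc 1 9 := by
    refine mc_ge (by norm_num) fun x hx1 hx2 => ?_
    interval_cases x
    exacts [c1.ge, le_trans (by norm_num) cge2, le_trans (by norm_num) cge3, le_trans (by norm_num) cge4, le_trans (by norm_num) cge5, le_trans (by norm_num) cge6, le_trans (by norm_num) cge7, le_trans (by norm_num) cge8, le_trans (by norm_num) cge9]
  have h2 : (3/2 : ℚ) ≤ mc 2 9 := by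
    refine mc_ge (by norm_num) fun x hx1 hx2 => ?_
    interval_cases x
    exacts [le_trans (by norm_num) cge2, le_trans (by norm_num) cge3, le_trans (by norm_num) cge4, le_trans (by norm_num) cge5, le_trans (by norm_num) cge6, le_trans (by norm_num) cge7, le_trans (by norm_num) cge8, le_trans (by norm_num) cge9]
  have h3 : (27/16 : ℚ) ≤ mc 3 9 := by
    refine mc_ge (by norm_num) fun x hx1 hx2 => ?_
    interval_cases x
    exacts [le_trans (by norm_num) cge3, le_trans (by norm_num) cge4, le_trans (by norm_num) cge5, le_trans (by norm_num) cge6, le_trans (by norm_num) cge7, le_trans (by norm_num) cge8, le_trans (by norm_num) cge9]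
  have h4 : (941650327899/549755813888 : ℚ) ≤ mc 4 9 := by
    refine mc_ge (by norm_num) fun x hx1 hx2 => ?_
    interval_cases x
    exacts [le_trans (by norm_num) cge4, le_trans (by norm_num) cge5, le_trans (by norm_num) cge6, le_trans (by norm_num) cge7, le_trans (by norm_num) cge8, le_trans (by norm_num) cge9]
  have h5 : (941650327899/549755813888 : ℚ) ≤ mc 5 9 := by
    refine mc_ge (by norm_num) fun x hx1 hx2 => ?_
    interval_cases x
    exacts [le_trans (by norm_num) cge5, le_trans (by norm_num) cge6, le_trans (by norm_num) cge7, le_trans (by norm_num) cge8, le_trans (by norm_num) cge9]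
  have h6 : (941650327899/549755813888 : ℚ) ≤ mc 6 9 := by
    refine mc_ge (by norm_num) fun x hx1 hx2 => ?_
    interval_cases x
    exacts [le_trans (by norm_num) cge6, le_trans (by norm_num) cge7, le_trans (by norm_num) cge8, le_trans (by norm_num) cge9]
  have h7 : (941650327899/549755813888 : ℚ) ≤ mc 7 9 := by
    refine mc_ge (by norm_num) fun x hx1 hx2 => ?_
    interval_cases x
    exacts [le_trans (by norm_num) cge7, le_trans (by norm_num) cge8, le_trans (by norm_num) cge9]
  have h8 : (941650327899/549755813888 : ℚ) ≤ mc 8 9 := by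
    refine mc_ge (by norm_num) fun x hx1 hx2 => ?_
    interval_cases x
    exacts [le_trans (by norm_num) cge8, le_trans (by norm_num) cge9]
  have h9 : (941650327899/549755813888 : ℚ) ≤ mc 9 9 := by
    refine mc_ge (by norm_num) fun x hx1 hx2 => ?_
    interval_cases x
    exacts [le_trans (by norm_num) cge9]
  linarith

lemma cge11 : (1968712895268696291/1152921504606846976 : ℚ) ≤ c 11 := by
  have e := c_eq 9
  norm_num [Finset.sum_Icc_succ_top, Nat.choose] at e
  rw [e]
  have h1 : (1 : ℚ) ≤ mc 1 10 := by
    refine mc_ge (by norm_num) fun x hx1 hx2 => ?_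
    interval_cases x
    exacts [c1.ge, le_trans (by norm_num) cge2, le_trans (by norm_num) cge3, le_trans (by norm_num) cge4, le_trans (by norm_num) cge5, le_trans (by norm_num) cge6, le_trans (by norm_num) cge7, le_trans (by norm_num) cge8, le_trans (by norm_num) cge9, le_trans (by norm_num) cge10]
  have h2 : (3/2 : ℚ) ≤ mc 2 10 := by
    refine mc_ge (by norm_num) fun x hx1 hx2 => ?_
    interval_cases x
    exacts [le_trans (by norm_num) cge2, le_trans (by norm_num) cge3, le_trans (by norm_num) cge4, le_trans (by norm_num) cge5, le_trans (by norm_num) cge6, le_trans (by norm_num) cge7, le_trans (by norm_num) cge8, le_trans (by norm_num) cge9, le_trans (by norm_num) cge10]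
  have h3 : (27/16 : ℚ) ≤ mc 3 10 := by
    refine mc_ge (by norm_num) fun x hx1 hx2 => ?_
    interval_cases x
    exacts [le_trans (by norm_num) cge3, le_trans (by norm_num) cge4, le_trans (by norm_num) cge5, le_trans (by norm_num) cge6, le_trans (by norm_num) cge7, le_trans (by norm_num) cge8, le_trans (by norm_num) cge9, le_trans (by norm_num) cge10]
  have h4 : (962504571896853/562949953421312 : ℚ) ≤ mc 4 10 := by
    refine mc_ge (by norm_num) fun x hx1 hx2 => ?_
    interval_cases x
    exacts [le_trans (by norm_num) cge4, le_trans (by norm_num) cge5, le_trans (by norm_num) cge6, le_trans (by norm_num) cge7, le_trans (by norm_num) cge8, le_trans (by norm_num) cge9, le_trans (by norm_num) cge10]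
  have h5 : (962504571896853/562949953421312 : ℚ) ≤ mc 5 10 := by
    refine mc_ge (by norm_num) fun x hx1 hx2 => ?_
    interval_cases x
    exacts [le_trans (by norm_num) cge5, le_trans (by norm_num) cge6, le_trans (by norm_num) cge7, le_trans (by norm_num) cge8, le_trans (by norm_num) cge9, le_trans (by norm_num) cge10]
  have h6 : (962504571896853/562949953421312 : ℚ) ≤ mc 6 10 := by
    refine mc_ge (by norm_num) fun x hx1 hx2 => ?_
    interval_cases x
    exacts [le_trans (by norm_num) cge6, le_trans (by norm_num) cge7, le_trans (by norm_num) cge8, le_trans (by norm_num) cge9, le_trans (by norm_num) cge10]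
  have h7 : (962504571896853/562949953421312 : ℚ) ≤ mc 7 10 := by
    refine mc_ge (by norm_num) fun x hx1 hx2 => ?_
    interval_cases x
    exacts [le_trans (by norm_num) cge7, le_trans (by norm_num) cge8, le_trans (by norm_num) cge9, le_trans (by norm_num) cge10]
  have h8 : (962504571896853/562949953421312 : ℚ) ≤ mc 8 10 := by
    refine mc_ge (by norm_num) fun x hx1 hx2 => ?_
    interval_cases x
    exacts [le_trans (by norm_num) cge8, le_trans (by norm_num) cge9, le_trans (by norm_num) cge10]
  have h9 : (962504571896853/562949953421312 : ℚ) ≤ mc 9 10 := by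
    refine mc_ge (by norm_num) fun x hx1 hx2 => ?_
    interval_cases x
    exacts [le_trans (by norm_num) cge9, le_trans (by norm_num) cge10]
  have h10 : (962504571896853/562949953421312 : ℚ) ≤ mc 10 10 := by
    refine mc_ge (by norm_num) fun x hx1 hx2 => ?_
    interval_cases x
    exacts [le_trans (by norm_num) cge10]
  linarith

lemma eps_anti : ∀ a b : ℕ, 4 ≤ a → a ≤ b → (b:ℚ)^3/(64*2^b) ≤ (a:ℚ)^3/(64*2^a) := by
  intro a b ha hab
  induction b, hab using Nat.le_induction with
  | base => exact le_refl _
  | succ n hn ih =>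
    refine le_trans ?_ ih
    have hn4 : (4:ℚ) ≤ n := by exact_mod_cast le_trans ha hn
    have h2 : (0:ℚ) < 2^n := by positivity
    have ha4 : 4*(n:ℚ)^2 ≤ (n:ℚ)^3 := by
      nlinarith [mul_nonneg (show (0:ℚ) ≤ (n:ℚ)-4 by linarith) (sq_nonneg (n:ℚ))]
    have key3 : ((n:ℚ)+1)^3 ≤ 2*(n:ℚ)^3 := by nlinarith [ha4, hn4]
    rw [div_le_div_iff₀ (by positivity) (by positivity)]
    have h2' : (2:ℚ)^(n+1) = 2*2^n := by ring
    rw [h2']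
    push_cast
    nlinarith [mul_le_mul_of_nonneg_right key3 h2.le]

lemma pow38 : ∀ n : ℕ, 15 ≤ n → 8*n^3 ≤ 2^n := by
  intro n hn
  induction n, hn using Nat.le_induction with
  | base => norm_num
  | succ n hn ih =>
    have e1 : 15*n^2 ≤ n^3 := by nlinarith
    have e2 : 15*n ≤ n^2 := by nlinarith
    have : 8*(n+1)^3 ≤ 2*(8*n^3) := by nlinarith [e1, e2]
    calc 8*(n+1)^3 ≤ 2*(8*n^3) := this
    _ ≤ 2*2^n := by omega
    _ = 2^(n+1) := by ring

lemma sum_choose (n : ℕ) (hn : 2 ≤ n) :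
    ∑ j ∈ Finset.Ioc 0 (n-1), ((n.choose j : ℚ)) = 2^n - 2 := by
  have h0 : Finset.range (n+1) = insert 0 (insert n (Finset.Ioc 0 (n-1))) := by
    ext x
    simp only [Finset.mem_range, Finset.mem_insert, Finset.mem_Ioc]
    omega
  have hs := Nat.sum_range_choose n
  have hq : ∑ j ∈ Finset.range (n+1), ((n.choose j : ℚ)) = 2^n := by
    exact_mod_cast congrArg (Nat.cast (R := ℚ)) hs
  rw [h0, Finset.sum_insert (by simp only [Finset.mem_insert, Finset.mem_Ioc]; omega), Finset.sum_insert (by simp only [Finset.mem_Ioc]; omega)] at hq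
  simp only [Nat.choose_zero_right, Nat.choose_self, Nat.cast_one] at hq
  linarith

lemma c_eq' (n : ℕ) (hn : 2 ≤ n) : c n = (n:ℚ)/2^(n-1) +
    (1/2^n) * ∑ j ∈ Finset.Ioc 0 (n-1), ((n.choose j : ℚ)) * mc j (n-1) := by
  obtain ⟨k, rfl⟩ : ∃ k, n = k + 2 := ⟨n - 2, by omega⟩
  rw [c_eq k, ← Finset.Icc_add_one_left_eq_Ioc]
  norm_num

lemma key_s13 (n : ℕ) (hn : 12 ≤ n) :
    (27/16 + (n:ℚ)^3/(64*2^n)) * 2^n ≤ 2*n + ((n:ℚ) + (3/2)*((n.choose 2 : ℕ):ℚ) +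
      (27/16)*((n.choose 3 : ℕ):ℚ) +
      (27/16 + ((n-1:ℕ):ℚ)^3/(32*2^n)) * (2^n - 2 - n - ((n.choose 2:ℕ):ℚ) - ((n.choose 3:ℕ):ℚ))) := by
  by_cases h15 : 15 ≤ n
  · set N : ℚ := (n:ℚ) with hN
    have hN15 : (15:ℚ) ≤ N := by rw [hN]; exact_mod_cast h15
    have hsub : ((n-1:ℕ):ℚ) = N - 1 := by push_cast [Nat.cast_sub (by omega : 1 ≤ n)]; ring
    have ha : ((n.choose 2:ℕ):ℚ) = N*(N-1)/2 := by
      rw [Nat.cast_choose_two]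
    have hbU : ((n.choose 3:ℕ):ℚ) ≤ N^3 := by
      rw [hN]
      exact_mod_cast Nat.choose_le_pow n 3
    have hb0 : (0:ℚ) ≤ ((n.choose 3:ℕ):ℚ) := by positivity
    have ht : 8*N^3 ≤ (2:ℚ)^n := by rw [hN]; exact_mod_cast pow38 n h15
    set t : ℚ := (2:ℚ)^n with hT
    have ht0 : (0:ℚ) < t := by positivity
    set b : ℚ := ((n.choose 3:ℕ):ℚ) with hB
    have ht0' : t ≠ 0 := ne_of_gt ht0
    rw [hsub, ha]
    -- fraction bound
    have hfrac : (N-1)^3*(2 + N + N*(N-1)/2 + b)/(32*t) ≤ N^3/128 := by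
      rw [div_le_div_iff₀ (by positivity) (by norm_num)]
      have h1 : (N-1)^3 ≤ N^3 := by nlinarith
      have h2 : 2 + N + N*(N-1)/2 + b ≤ 2*N^3 := by nlinarith
      have h3 : (N-1)^3*(2 + N + N*(N-1)/2 + b) ≤ 2*N^6 := by
        have h4 : (0:ℚ) ≤ (N-1)^3 := pow_nonneg (by linarith) 3
        have h5 : (0:ℚ) ≤ 2 + N + N*(N-1)/2 + b := by nlinarith
        calc (N-1)^3*(2 + N + N*(N-1)/2 + b) ≤ N^3 * (2*N^3) := by
              exact mul_le_mul h1 h2 h5 (by positivity)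
        _ = 2*N^6 := by ring
      nlinarith [mul_le_mul_of_nonneg_left ht (show (0:ℚ) ≤ 32*N^3 by positivity)]
    have expand : 2*N + (N + (3/2)*(N*(N-1)/2) + (27/16)*b +
        (27/16 + (N-1)^3/(32*t)) * (t - 2 - N - N*(N-1)/2 - b))
        = (27/16)*t + 3*N - (3/16)*(N*(N-1)/2) - (27/16)*(2+N) + (N-1)^3/32
          - (N-1)^3*(2 + N + N*(N-1)/2 + b)/(32*t) := by
      field_simp
      ring
    rw [expand]
    have goal2 : (27/16 + N^3/(64*t)) * t = (27/16)*t + N^3/64 := by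
      field_simp
    rw [goal2]
    nlinarith [sq_nonneg (N-8), hfrac]
  · interval_cases n <;>
      norm_num [show Nat.choose 12 2 = 66 from rfl, show Nat.choose 12 3 = 220 from rfl,
        show Nat.choose 13 2 = 78 from rfl, show Nat.choose 13 3 = 286 from rfl,
        show Nat.choose 14 2 = 91 from rfl, show Nat.choose 14 3 = 364 from rfl]

lemma claimA : ∀ n : ℕ, 12 ≤ n → 27/16 + (n:ℚ)^3/(64*2^n) ≤ c n := by
  intro n
  induction n using Nat.strong_induction_on with
  | _ n IH =>
  intro hn
  have hn1 : n - 1 + 1 = n := by omega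
  have hpow : (2:ℚ)^n = 2*2^(n-1) := by
    conv_lhs => rw [← hn1]
    rw [pow_succ']
  have h2n : (0:ℚ) < 2^n := by positivity
  have h2n1 : (0:ℚ) < 2^(n-1 : ℕ) := by positivity
  set E : ℚ := ((n-1:ℕ):ℚ)^3/(64*2^(n-1)) with hE
  have hE0 : 0 ≤ E := by positivity
  -- middle bound
  have hmid : ∀ m, 4 ≤ m → m ≤ n-1 → 27/16 + E ≤ c m := by
    intro m h4 hm
    by_cases h11 : m ≤ 11
    · have h := eps_anti 11 (n-1) (by norm_num) (by omega)
      rw [hE]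
      interval_cases m <;>
        linarith [cge4, cge5, cge6, cge7, cge8, cge9, cge10, cge11, h]
    · have h12 : 12 ≤ m := by omega
      have h1 := IH m (by omega) h12
      have h2 := eps_anti m (n-1) (by omega) hm
      rw [hE]
      linarith
  have hc3 : ∀ x, 3 ≤ x → x ≤ n-1 → (27/16:ℚ) ≤ c x := by
    intro x h3 hx
    rcases Nat.lt_or_ge x 4 with h | h
    · have hx3 : x = 3 := by omega
      rw [hx3]; exact cge3
    · linarith [hmid x h hx]
  have hc2 : ∀ x, 2 ≤ x → x ≤ n-1 → (3/2:ℚ) ≤ c x := by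
    intro x h2 hx
    rcases Nat.lt_or_ge x 3 with h | h
    · have hx2 : x = 2 := by omega
      rw [hx2]; linarith [cge2]
    · linarith [hc3 x h hx]
  have hc1 : ∀ x, 1 ≤ x → x ≤ n-1 → (1:ℚ) ≤ c x := by
    intro x h1 hx
    rcases Nat.lt_or_ge x 2 with h | h
    · have hx1 : x = 1 := by omega
      rw [hx1, c1]
    · linarith [hc2 x h hx]
  have hm1 : (1:ℚ) ≤ mc 1 (n-1) := mc_ge (by omega) hc1
  have hm2 : (3/2:ℚ) ≤ mc 2 (n-1) := mc_ge (by omega) hc2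
  have hm3 : (27/16:ℚ) ≤ mc 3 (n-1) := mc_ge (by omega) hc3
  have hm4 : ∀ j, 3 < j → j ≤ n-1 → 27/16 + E ≤ mc j (n-1) := fun j hj hj2 =>
    mc_ge hj2 (fun x hx1 hx2 => hmid x (by omega) hx2)
  -- sums
  rw [c_eq' n (by omega)]
  set f : ℕ → ℚ := fun j => ((n.choose j : ℕ):ℚ) * mc j (n-1) with hf
  have hsplit : ∑ j ∈ Finset.Ioc 0 (n-1), f j
      = (∑ j ∈ Finset.Ioc 0 3, f j) + ∑ j ∈ Finset.Ioc 3 (n-1), f j :=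
    (Finset.sum_Ioc_consecutive _ (by omega) (by omega)).symm
  have h123 : ∑ j ∈ Finset.Ioc 0 3, f j = f 1 + f 2 + f 3 := by
    rw [show Finset.Ioc 0 3 = {1, 2, 3} from rfl]
    rw [Finset.sum_insert (by decide), Finset.sum_insert (by decide), Finset.sum_singleton]
    ring
  have hCsplit : ∑ j ∈ Finset.Ioc 0 (n-1), ((n.choose j : ℕ):ℚ)
      = (∑ j ∈ Finset.Ioc 0 3, ((n.choose j : ℕ):ℚ)) + ∑ j ∈ Finset.Ioc 3 (n-1), ((n.choose j : ℕ):ℚ) :=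
    (Finset.sum_Ioc_consecutive _ (by omega) (by omega)).symm
  have hC123 : ∑ j ∈ Finset.Ioc 0 3, ((n.choose j : ℕ):ℚ)
      = (n:ℚ) + ((n.choose 2 : ℕ):ℚ) + ((n.choose 3 : ℕ):ℚ) := by
    rw [show Finset.Ioc 0 3 = {1, 2, 3} from rfl]
    rw [Finset.sum_insert (by decide), Finset.sum_insert (by decide), Finset.sum_singleton,
      Nat.choose_one_right]
    ring
  have hCtail : ∑ j ∈ Finset.Ioc 3 (n-1), ((n.choose j : ℕ):ℚ)
      = 2^n - 2 - (n:ℚ) - ((n.choose 2 : ℕ):ℚ) - ((n.choose 3 : ℕ):ℚ) := by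
    have := sum_choose n (by omega)
    rw [hCsplit, hC123] at this
    linarith
  have htail : (27/16 + E) * (2^n - 2 - (n:ℚ) - ((n.choose 2 : ℕ):ℚ) - ((n.choose 3 : ℕ):ℚ))
      ≤ ∑ j ∈ Finset.Ioc 3 (n-1), f j := by
    rw [← hCtail, Finset.mul_sum]
    apply Finset.sum_le_sum
    intro j hj
    rw [Finset.mem_Ioc] at hj
    rw [hf]
    calc (27/16 + E) * ((n.choose j : ℕ):ℚ) = ((n.choose j : ℕ):ℚ) * (27/16 + E) := by ring
    _ ≤ ((n.choose j : ℕ):ℚ) * mc j (n-1) :=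
        mul_le_mul_of_nonneg_left (hm4 j hj.1 hj.2) (Nat.cast_nonneg _)
  have hterm1 : (n:ℚ) * 1 ≤ f 1 := by
    rw [hf]; simp only [Nat.choose_one_right]
    exact mul_le_mul_of_nonneg_left hm1 (Nat.cast_nonneg _)
  have hterm2 : ((n.choose 2 : ℕ):ℚ) * (3/2) ≤ f 2 := by
    rw [hf]; exact mul_le_mul_of_nonneg_left hm2 (Nat.cast_nonneg _)
  have hterm3 : ((n.choose 3 : ℕ):ℚ) * (27/16) ≤ f 3 := by
    rw [hf]; exact mul_le_mul_of_nonneg_left hm3 (Nat.cast_nonneg _)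
  -- connect to key
  have hkey := key_s13 n hn
  have hEeq : ((n-1:ℕ):ℚ)^3/(32*2^n) = E := by
    rw [hE, hpow]; ring
  rw [hEeq] at hkey
  have hfinal : (27/16 + (n:ℚ)^3/(64*2^n)) * 2^n ≤ 2*(n:ℚ) + ∑ j ∈ Finset.Ioc 0 (n-1), f j := by
    rw [hsplit, h123]
    calc (27/16 + (n:ℚ)^3/(64*2^n)) * 2^n
        ≤ 2*(n:ℚ) + ((n:ℚ) + (3/2)*((n.choose 2 : ℕ):ℚ) + (27/16)*((n.choose 3 : ℕ):ℚ) +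
          (27/16 + E) * (2^n - 2 - (n:ℚ) - ((n.choose 2:ℕ):ℚ) - ((n.choose 3:ℕ):ℚ))) := hkey
    _ ≤ 2*(n:ℚ) + (f 1 + f 2 + f 3 + ∑ j ∈ Finset.Ioc 3 (n-1), f j) := by
        linarith [hterm1, hterm2, hterm3, htail]
  calc (27/16 : ℚ) + (n:ℚ)^3/(64*2^n)
      = ((27/16 + (n:ℚ)^3/(64*2^n)) * 2^n)/2^n := by field_simp
  _ ≤ (2*(n:ℚ) + ∑ j ∈ Finset.Ioc 0 (n-1), f j)/2^n := by
      exact (div_le_div_iff_of_pos_right h2n).mpr hfinal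
  _ = (n:ℚ)/2^(n-1) + (1/2^n) * ∑ j ∈ Finset.Ioc 0 (n-1), f j := by
      rw [hpow]; field_simp

theorem c_ge (n : ℕ) (hn : 4 ≤ n) : 27/16 ≤ c n := by
  by_cases h12 : 12 ≤ n
  · have h := claimA n h12
    have : (0:ℚ) ≤ (n:ℚ)^3/(64*2^n) := by positivity
    linarith
  · interval_cases n <;>
      linarith [cge4, cge5, cge6, cge7, cge8, cge9, cge10, cge11]
end
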